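/- Let n ≥ 2 and suppose there exist a group G and a finite subset S ⊆ G whose elements are pairwise independent such that the incidence graph of the complete simple graph K_n is isomorphic to the coset graph of (G,S). Then there exists a permutation τ ∈ S_n satisfying condition (C). -/

import Mathlib

/-- The `(n-1)`-cycle `σ = (1,2,...,n-1)` of `S_n`, viewed as a permutation of `ℕ`
fixing `0` and every `k ≥ n`: `σ(k) = k+1` for `1 ≤ k ≤ n-2`, `σ(n-1) = 1`. -/
def sigmaFun (n k : ℕ) : ℕ :=
  if 1 ≤ k ∧ k ≤ n - 2 then k + 1 else if k = n - 1 then 1 else k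

/-- The involution `ρ ∈ S_n` with `ρ(n-1) = n`, `ρ(n) = n-1` and `ρ(k) = n-1-k` for
`1 ≤ k ≤ n-2`, viewed as a permutation of `ℕ` fixing `0` and every `k > n`. -/
def rhoFun (n k : ℕ) : ℕ :=
  if 1 ≤ k ∧ k ≤ n - 2 then n - 1 - k
  else if k = n - 1 then n else if k = n then n - 1 else k

/-- Condition (C): `τ ∈ S_n` (i.e. `τ` fixes `0` and every `k > n`) has order `2`,
`τ(n) = n-1`, and for every `k ∈ {1,...,n-2}`,
`τ σ^k τ = σ^(τ(k)) τ σ^(τ(ρ(τ(k))))`. -/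
def ConditionC (n : ℕ) (σ ρ τ : Equiv.Perm ℕ) : Prop :=
  orderOf τ = 2 ∧ τ n = n - 1 ∧ (∀ k : ℕ, k = 0 ∨ n < k → τ k = k) ∧
  ∀ k : ℕ, 1 ≤ k → k ≤ n - 2 →
    τ * σ ^ k * τ = σ ^ (τ k) * τ * σ ^ (τ (ρ (τ k)))

/-- The right coset `H·x = {h*x : h ∈ H}` of a subgroup `H`. -/
def rcoset {G : Type*} [Group G] (H : Subgroup G) (x : G) : Set G :=
  {g : G | ∃ h ∈ H, g = h * x}

/-- Vertices of the coset graph of `(G,S)`. -/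
def GVert {G : Type*} [Group G] (S : Set G) : Type _ :=
  {p : G × Set G // p.1 ∈ S ∧ ∃ x : G, p.2 = rcoset (Subgroup.zpowers p.1) x}

/-- The coset graph of `(G,S)`. -/
def cosetGraph {G : Type*} [Group G] (S : Set G) : SimpleGraph (GVert S) :=
  SimpleGraph.fromRel fun u v => (u.1.2 ∩ v.1.2).Nonempty

/-- The incidence graph of a simple graph `Γ`. -/
def incidenceGraph {V : Type*} (Γ : SimpleGraph V) : SimpleGraph (V ⊕ Γ.edgeSet) :=
  SimpleGraph.fromRel fun x y =>
    ∃ (v : V) (a : Γ.edgeSet), x = Sum.inl v ∧ y = Sum.inr a ∧ v ∈ (a : Sym2 V)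

open Subgroup

lemma exists_pow_lt_of_mem_zpowers {G : Type*} [Group G] {s : G} {m : ℕ} (hm : 0 < m)
    (hs : orderOf s = m) {g : G} (hg : g ∈ zpowers s) : ∃ j : ℕ, j < m ∧ g = s ^ j := by
  obtain ⟨k, hk⟩ := Subgroup.mem_zpowers_iff.mp hg
  have h1 : 0 ≤ k % (m : ℤ) := Int.emod_nonneg k (by exact_mod_cast hm.ne')
  have h2 : k % (m : ℤ) < m := Int.emod_lt_of_pos k (by exact_mod_cast hm)
  refine ⟨(k % (m : ℤ)).toNat, by omega, ?_⟩
  have hsm : s ^ (m : ℤ) = 1 := by rw [zpow_natCast, ← hs, pow_orderOf_eq_one]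
  have : s ^ k = s ^ (k % (m : ℤ)) := by
    conv_lhs => rw [← Int.emod_add_mul_ediv k (m : ℤ)]
    rw [zpow_add, zpow_mul, hsm, one_zpow, mul_one]
  rw [← hk, this, ← zpow_natCast, Int.toNat_of_nonneg h1]


open SimpleGraph Sum

section Cosets

variable {G : Type*} [Group G]

lemma mem_rcoset_self (H : Subgroup G) (x : G) : x ∈ rcoset H x :=
  ⟨1, H.one_mem, (one_mul x).symm⟩

lemma mul_mem_rcoset (H : Subgroup G) (x : G) {h : G} (hh : h ∈ H) : h * x ∈ rcoset H x :=
  ⟨h, hh, rfl⟩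

lemma rcoset_eq_of_mem {H : Subgroup G} {x y : G} (h : y ∈ rcoset H x) :
    rcoset H y = rcoset H x := by
  obtain ⟨h0, hh0, rfl⟩ := h
  ext g
  constructor
  · rintro ⟨h1, hh1, rfl⟩
    exact ⟨h1 * h0, H.mul_mem hh1 hh0, (mul_assoc _ _ _).symm⟩
  · rintro ⟨h1, hh1, rfl⟩
    exact ⟨h1 * h0⁻¹, H.mul_mem hh1 (H.inv_mem hh0), by group⟩

lemma rcoset_eq_of_inter {H : Subgroup G} {x y : G}
    (h : (rcoset H x ∩ rcoset H y).Nonempty) : rcoset H x = rcoset H y := by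
  obtain ⟨z, hz1, hz2⟩ := h
  rw [← rcoset_eq_of_mem hz1, ← rcoset_eq_of_mem hz2]

lemma cosetGraph_adj {S : Set G} {u v : GVert S} :
    (cosetGraph S).Adj u v ↔ u ≠ v ∧ (u.1.2 ∩ v.1.2).Nonempty := by
  unfold cosetGraph
  rw [SimpleGraph.fromRel_adj]
  constructor
  · rintro ⟨hne, h | h⟩
    · exact ⟨hne, h⟩
    · exact ⟨hne, by rwa [Set.inter_comm]⟩
  · rintro ⟨hne, h⟩
    exact ⟨hne, Or.inl h⟩

lemma not_adj_same {S : Set G} {u v : GVert S} (h : u.1.1 = v.1.1) :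
    ¬ (cosetGraph S).Adj u v := by
  intro hadj
  rw [cosetGraph_adj] at hadj
  obtain ⟨hne, hint⟩ := hadj
  obtain ⟨x, hx⟩ := u.2.2
  obtain ⟨y, hy⟩ := v.2.2
  rw [hx, hy, h] at hint
  have := rcoset_eq_of_inter hint
  apply hne
  apply Subtype.ext
  apply Prod.ext h
  rw [hx, hy, h, this]

end Cosets

section Incidence

variable {V : Type*} {Γ : SimpleGraph V}

lemma incidence_adj {v : V} {e : Γ.edgeSet} :
    (incidenceGraph Γ).Adj (inl v) (inr e) ↔ v ∈ (e : Sym2 V) := by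
  unfold incidenceGraph
  rw [SimpleGraph.fromRel_adj]
  constructor
  · rintro ⟨-, ⟨v', a', hv', ha', hm⟩ | ⟨v', a', hv', ha', hm⟩⟩
    · cases hv'; cases ha'; exact hm
    · exact absurd hv' (by simp)
  · intro hm
    exact ⟨by simp, Or.inl ⟨v, e, rfl, rfl, hm⟩⟩

lemma incidence_not_adj_ll {v w : V} : ¬ (incidenceGraph Γ).Adj (inl v) (inl w) := by
  intro h
  rw [incidenceGraph, SimpleGraph.fromRel_adj] at h
  rcases h with ⟨-, ⟨_, _, h1, h2, _⟩ | ⟨_, _, h1, h2, _⟩⟩ <;> simp at h1 h2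

lemma incidence_not_adj_rr {e f : Γ.edgeSet} : ¬ (incidenceGraph Γ).Adj (inr e) (inr f) := by
  intro h
  rw [incidenceGraph, SimpleGraph.fromRel_adj] at h
  rcases h with ⟨-, ⟨_, _, h1, h2, _⟩ | ⟨_, _, h1, h2, _⟩⟩ <;> simp at h1 h2

lemma incidence_adj_isLeft {x y : V ⊕ Γ.edgeSet} (h : (incidenceGraph Γ).Adj x y) :
    x.isLeft = !y.isLeft := by
  rcases x with v | e <;> rcases y with w | f <;> simp
  · exact incidence_not_adj_ll h
  · exact incidence_not_adj_rr h

lemma incidence_triangle_free {x y z : V ⊕ Γ.edgeSet} (hxy : (incidenceGraph Γ).Adj x y)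
    (hyz : (incidenceGraph Γ).Adj y z) (hxz : (incidenceGraph Γ).Adj x z) : False := by
  have h1 := incidence_adj_isLeft hxy
  have h2 := incidence_adj_isLeft hyz
  have h3 := incidence_adj_isLeft hxz
  rw [h2] at h1
  rw [h1] at h3
  rcases z with _ | _ <;> simp at h3

end Incidence

section Degrees

lemma incidence_degree_point {n : ℕ} (v : Fin n) :
    Nat.card ((incidenceGraph (completeGraph (Fin n))).neighborSet (inl v)) = n - 1 := by
  have hbij : Function.Bijective (fun w : {w : Fin n // w ≠ v} =>
      (⟨inr ⟨s(v, w.1), by rw [SimpleGraph.mem_edgeSet]; exact w.2.symm⟩,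
        by rw [SimpleGraph.mem_neighborSet, incidence_adj]; exact Sym2.mem_mk_left v w.1⟩ :
        (incidenceGraph (completeGraph (Fin n))).neighborSet (inl v))) := by
    constructor
    · intro w w' h
      apply Subtype.ext
      have h2 := congrArg (fun z => z.1) h
      simp only at h2
      have h3 : (s(v, w.1) : Sym2 (Fin n)) = s(v, w'.1) := by
        have := congrArg (fun z => match z with | inl _ => (s(v,v) : Sym2 (Fin n)) | inr e => e.1) h2
        simpa using this
      exact (Sym2.congr_right).mp h3
    · rintro ⟨u, hu⟩
      rw [SimpleGraph.mem_neighborSet] at hu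
      rcases u with w | e
      · exact absurd hu incidence_not_adj_ll
      · rw [incidence_adj] at hu
        obtain ⟨w, hw⟩ := Sym2.mem_iff_exists.mp hu
        have hwv : w ≠ v := by
          intro h
          have he := e.2
          rw [hw, h, SimpleGraph.mem_edgeSet] at he
          exact (completeGraph (Fin n)).irrefl he
        refine ⟨⟨w, hwv⟩, ?_⟩
        apply Subtype.ext
        simp only
        congr 1
        exact Subtype.ext hw.symm
  rw [← Nat.card_congr (Equiv.ofBijective _ hbij)]
  rw [Nat.card_eq_fintype_card, Fintype.card_subtype_compl, Fintype.card_fin,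
    Fintype.card_subtype_eq]

lemma incidence_degree_edge {n : ℕ} (e : (completeGraph (Fin n)).edgeSet) :
    Nat.card ((incidenceGraph (completeGraph (Fin n))).neighborSet (inr e)) = 2 := by
  have hset : (incidenceGraph (completeGraph (Fin n))).neighborSet (inr e)
      = inl '' {w : Fin n | w ∈ (e : Sym2 (Fin n))} := by
    ext u
    rcases u with w | f
    · simp only [SimpleGraph.mem_neighborSet, Set.mem_image, Set.mem_setOf_eq]
      rw [SimpleGraph.adj_comm, incidence_adj]
      constructor
      · intro h
        exact ⟨w, h, rfl⟩
      · rintro ⟨w', hw', h⟩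
        cases inl_injective h
        exact hw'
    · constructor
      · intro h
        exact absurd h incidence_not_adj_rr
      · rintro ⟨w', _, h⟩
        simp at h
  rw [hset, Nat.card_coe_set_eq, Set.ncard_image_of_injective _ inl_injective]
  obtain ⟨z, hz⟩ := e
  induction z using Sym2.ind with
  | _ a b =>
    have hab : a ≠ b := by
      rw [SimpleGraph.mem_edgeSet] at hz
      exact hz
    have : {w : Fin n | w ∈ (s(a, b) : Sym2 (Fin n))} = {a, b} := by
      ext w
      simp [Sym2.mem_iff]
    rw [this]
    exact Set.ncard_pair hab

lemma coset_degree {G : Type*} [Group G] {S : Set G} {s t : G}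
    (hsS : s ∈ S) (htS : t ∈ S) (hst : s ≠ t)
    (hSub : ∀ u ∈ S, u = s ∨ u = t)
    (hind : ∀ a ∈ S, ∀ b ∈ S, a ≠ b → Subgroup.zpowers a ⊓ Subgroup.zpowers b = ⊥)
    (v : GVert S) : Nat.card ((cosetGraph S).neighborSet v) = orderOf v.1.1 := by
  classical
  obtain ⟨⟨u, C⟩, hu, x, hC⟩ := v
  have hC' : C = rcoset (Subgroup.zpowers u) x := hC
  show Nat.card _ = orderOf u
  set u' : G := if u = s then t else s with hu'
  have hu'S : u' ∈ S := by rw [hu']; split <;> assumption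
  have huu' : u ≠ u' := by
    rcases hSub u hu with h | h
    · rw [hu', if_pos h, h]; exact hst
    · rw [hu', if_neg (by rw [h]; exact hst.symm), h]; exact hst.symm
  have hset : ∀ w ∈ S, w = u ∨ w = u' := by
    intro w hw
    rcases hSub w hw with h | h <;> rcases hSub u hu with h2 | h2
    · left; rw [h, h2]
    · right; rw [hu', if_neg (by rw [h2]; exact hst.symm), h]
    · right; rw [hu', if_pos h2, h]
    · left; rw [h, h2]
  have hbot : Subgroup.zpowers u' ⊓ Subgroup.zpowers u = ⊥ :=
    hind u' hu'S u hu (Ne.symm huu')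
  set vv : GVert S := ⟨(u, C), hu, x, hC⟩ with hvv
  have hadj : ∀ c : G, c ∈ C →
      (cosetGraph S).Adj vv ⟨(u', rcoset (Subgroup.zpowers u') c), hu'S, c, rfl⟩ := by
    intro c hc
    apply cosetGraph_adj.mpr
    constructor
    · intro h
      have := congrArg (fun z => z.1.1) h
      exact huu' (by simpa using this)
    · exact ⟨c, hc, mem_rcoset_self _ _⟩
  set f : C → ((cosetGraph S).neighborSet vv) := fun c =>
    ⟨⟨(u', rcoset (Subgroup.zpowers u') c.1), hu'S, c.1, rfl⟩, hadj c.1 c.2⟩ with hf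
  have hbij : Function.Bijective f := by
    constructor
    · intro c c' h
      have h2 : rcoset (Subgroup.zpowers u') c.1 = rcoset (Subgroup.zpowers u') c'.1 := by
        have := congrArg (fun z => z.1.1.2) h
        simpa [hf] using this
      have hc' : c'.1 ∈ rcoset (Subgroup.zpowers u') c.1 := by
        rw [h2]; exact mem_rcoset_self _ _
      obtain ⟨h1, hh1, heq⟩ := hc'
      have heq' := heq
      have hc1 : (c : G) ∈ rcoset (Subgroup.zpowers u) x := by rw [← hC']; exact c.2
      have hc2 : (c' : G) ∈ rcoset (Subgroup.zpowers u) x := by rw [← hC']; exact c'.2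
      obtain ⟨k1, hk1, hke1⟩ := hc1
      obtain ⟨k2, hk2, hke2⟩ := hc2
      have hmem : h1 ∈ Subgroup.zpowers u := by
        rw [hke1, hke2, ← mul_assoc] at heq
        have h12 : k2 = h1 * k1 := mul_right_cancel heq
        have : h1 = k2 * k1⁻¹ := by rw [h12]; group
        rw [this]; exact mul_mem hk2 (inv_mem hk1)
      have hb : h1 ∈ Subgroup.zpowers u' ⊓ Subgroup.zpowers u := ⟨hh1, hmem⟩
      rw [hbot, Subgroup.mem_bot] at hb
      have h9 : h1 * (c : G) = c := by rw [hb, one_mul]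
      exact Subtype.ext (heq'.trans h9).symm
    · rintro ⟨w, hw⟩
      rw [SimpleGraph.mem_neighborSet, cosetGraph_adj] at hw
      obtain ⟨hne, hint⟩ := hw
      obtain ⟨⟨w1, D⟩, hw1, y, hD⟩ := w
      have hD' : D = rcoset (Subgroup.zpowers w1) y := hD
      rcases hset w1 hw1 with h | h
      · exfalso
        rw [h] at hD'
        have hint2 : (rcoset (Subgroup.zpowers u) x ∩ rcoset (Subgroup.zpowers u) y).Nonempty := by
          obtain ⟨c, hcv, hcd⟩ := hint
          refine ⟨c, ?_, ?_⟩
          · rw [← hC']; exact hcv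
          · rw [← hD']; exact hcd
        have hCD : C = D := by rw [hC', hD']; exact rcoset_eq_of_inter hint2
        exact hne (Subtype.ext (Prod.ext_iff.mpr ⟨h.symm, hCD⟩))
      · subst h
        obtain ⟨c, hc1, hc2⟩ := hint
        have hc1' : c ∈ C := hc1
        have hc2' : c ∈ D := hc2
        refine ⟨⟨c, hc1'⟩, ?_⟩
        apply Subtype.ext
        apply Subtype.ext
        refine Prod.ext_iff.mpr ⟨rfl, ?_⟩
        show rcoset (Subgroup.zpowers u') c = D
        rw [hD']
        exact rcoset_eq_of_mem (hD' ▸ hc2')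
  have h1 : Nat.card ((cosetGraph S).neighborSet vv) = Nat.card C :=
    (Nat.card_congr (Equiv.ofBijective f hbij)).symm
  have himg : rcoset (Subgroup.zpowers u) x
      = (fun g => g * x) '' ((Subgroup.zpowers u : Subgroup G) : Set G) := by
    ext g
    constructor
    · rintro ⟨h0, hh0, rfl⟩
      exact ⟨h0, hh0, rfl⟩
    · rintro ⟨h0, hh0, rfl⟩
      exact ⟨h0, hh0, rfl⟩
  rw [h1]
  rw [hC']
  rw [himg]
  rw [Nat.card_coe_set_eq]
  rw [Set.ncard_image_of_injective _ (mul_left_injective x)]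
  rw [← Nat.card_coe_set_eq]
  exact Nat.card_zpowers u

end Degrees

theorem graph_facts (n : ℕ) (hn : 4 ≤ n) {G : Type} [Group G] (S : Set G)
    (hind : ∀ a ∈ S, ∀ b ∈ S, a ≠ b → Subgroup.zpowers a ⊓ Subgroup.zpowers b = ⊥)
    (φ : incidenceGraph (completeGraph (Fin n)) ≃g cosetGraph S) :
    ∃ s t : G, orderOf s = n - 1 ∧ orderOf t = 2 ∧ t ∉ zpowers s ∧
      (∀ j : ℕ, t * s ^ j * t ∈ zpowers s → s ^ j = 1) ∧
      (∀ g : G, g ∈ zpowers s ∨ ∃ c ∈ zpowers s, ∃ d ∈ zpowers s, g = c * t * d) := by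
  classical
  haveI : NeZero n := ⟨by omega⟩
  have h01 : (0 : Fin n) ≠ 1 := by
    intro h
    have h2 := congrArg Fin.val h
    have h1n : (1 : ℕ) % n = 1 := Nat.mod_eq_of_lt (by omega)
    rw [Fin.val_zero, Fin.val_one', h1n] at h2
    exact absurd h2 (by omega)
  have he0 : s((0 : Fin n), (1 : Fin n)) ∈ (completeGraph (Fin n)).edgeSet := by
    rw [SimpleGraph.mem_edgeSet]
    exact h01
  set e0 : (completeGraph (Fin n)).edgeSet := ⟨s((0 : Fin n), 1), he0⟩ with he0def
  have hadj0 : (incidenceGraph (completeGraph (Fin n))).Adj (inl 0) (inr e0) :=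
    incidence_adj.mpr (Sym2.mem_mk_left _ _)
  set a : G := (φ (inl 0)).1.1 with ha
  set b : G := (φ (inr e0)).1.1 with hb
  have haS : a ∈ S := (φ (inl 0)).2.1
  have hbS : b ∈ S := (φ (inr e0)).2.1
  have hadj1 : (cosetGraph S).Adj (φ (inl 0)) (φ (inr e0)) := φ.map_adj_iff.mpr hadj0
  have hab : a ≠ b := fun h => not_adj_same h hadj1
  -- no three distinct elements of S
  have no3 : ∀ x ∈ S, ∀ y ∈ S, ∀ z ∈ S, x ≠ y → x ≠ z → y ≠ z → False := by
    intro x hx y hy z hz hxy hxz hyz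
    set vx : GVert S := ⟨(x, rcoset (Subgroup.zpowers x) 1), hx, 1, rfl⟩
    set vy : GVert S := ⟨(y, rcoset (Subgroup.zpowers y) 1), hy, 1, rfl⟩
    set vz : GVert S := ⟨(z, rcoset (Subgroup.zpowers z) 1), hz, 1, rfl⟩
    have hadj : ∀ (p q : G) (hp : p ∈ S) (hq : q ∈ S), p ≠ q →
        (cosetGraph S).Adj ⟨(p, rcoset (Subgroup.zpowers p) 1), hp, 1, rfl⟩
          ⟨(q, rcoset (Subgroup.zpowers q) 1), hq, 1, rfl⟩ := by
      intro p q hp hq hpq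
      apply cosetGraph_adj.mpr
      refine ⟨fun h => hpq (by simpa using congrArg (fun w => w.1.1) h), 
        ⟨1, mem_rcoset_self _ _, mem_rcoset_self _ _⟩⟩
    exact incidence_triangle_free
      (φ.symm.map_adj_iff.mpr (hadj x y hx hy hxy))
      (φ.symm.map_adj_iff.mpr (hadj y z hy hz hyz))
      (φ.symm.map_adj_iff.mpr (hadj x z hx hz hxz))
  have hsub : ∀ u ∈ S, u = a ∨ u = b := by
    intro u hu
    by_contra h
    push_neg at h
    exact no3 u hu a haS b hbS h.1 h.2 hab
  -- degrees
  have hdeg : ∀ x, Nat.card ((incidenceGraph (completeGraph (Fin n))).neighborSet x)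
      = Nat.card ((cosetGraph S).neighborSet (φ x)) :=
    fun x => Nat.card_congr (φ.mapNeighborSet x)
  have hvdeg : ∀ v : GVert S, Nat.card ((cosetGraph S).neighborSet v) = orderOf v.1.1 :=
    coset_degree haS hbS hab hsub hind
  have horda : orderOf a = n - 1 := by
    have h := hdeg (inl 0)
    rw [incidence_degree_point, hvdeg] at h
    exact h.symm
  have hordb : orderOf b = 2 := by
    have h := hdeg (inr e0)
    rw [incidence_degree_edge, hvdeg] at h
    exact h.symm
  have hbb : b * b = 1 := by
    have := pow_orderOf_eq_one b
    rw [hordb, pow_two] at this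
    exact this
  have hbinv : b⁻¹ = b := by
    rw [inv_eq_iff_mul_eq_one]
    exact hbb
  have hba : b ∉ zpowers a := by
    intro h
    have hmem : b ∈ Subgroup.zpowers a ⊓ Subgroup.zpowers b := ⟨h, Subgroup.mem_zpowers b⟩
    rw [hind a haS b hbS hab, Subgroup.mem_bot] at hmem
    rw [hmem, orderOf_one] at hordb
    omega
  have hbelts : ∀ g ∈ Subgroup.zpowers b, g = 1 ∨ g = b := by
    intro g hg
    obtain ⟨j, hj, rfl⟩ := exists_pow_lt_of_mem_zpowers (by omega) hordb hg
    interval_cases j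
    · left; rw [pow_zero]
    · right; rw [pow_one]
  -- sorted preimages
  have hleft : ∀ v : GVert S, v.1.1 = a → ∃ u : Fin n, φ.symm v = inl u := by
    intro v hv
    rcases hsv : φ.symm v with u | e
    · exact ⟨u, rfl⟩
    · exfalso
      have h := hdeg (inr e)
      rw [incidence_degree_edge, ← hsv, RelIso.apply_symm_apply, hvdeg, hv, horda] at h
      omega
  have hright : ∀ v : GVert S, v.1.1 = b → ∃ e, φ.symm v = inr e := by
    intro v hv
    rcases hsv : φ.symm v with u | e
    · exfalso
      have h := hdeg (inl u)
      rw [incidence_degree_point, ← hsv, RelIso.apply_symm_apply, hvdeg, hv, hordb] at h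
      omega
    · exact ⟨e, rfl⟩
  refine ⟨a, b, horda, hordb, hba, ?_, ?_⟩
  · -- F4
    intro j hwmem
    by_contra hne
    set w : G := b * a ^ j * b with hw
    have hassoc : b * (w * b) = a ^ j := by
      rw [hw]
      calc b * (b * a ^ j * b * b) = (b * b) * a ^ j * (b * b) := by group
        _ = a ^ j := by rw [hbb, one_mul, mul_one]
    set D1 : Set G := rcoset (Subgroup.zpowers b) 1 with hD1
    set D2 : Set G := rcoset (Subgroup.zpowers b) (w * b) with hD2
    set V1 : GVert S := ⟨(b, D1), hbS, 1, rfl⟩ with hV1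
    set V2 : GVert S := ⟨(b, D2), hbS, w * b, rfl⟩ with hV2
    have hmem1 : (1 : G) ∈ D1 := mem_rcoset_self _ _
    have hmemb : b ∈ D1 := ⟨b, Subgroup.mem_zpowers b, (mul_one b).symm⟩
    have hmemwb : w * b ∈ D2 := mem_rcoset_self _ _
    have hmemaj : a ^ j ∈ D2 := ⟨b, Subgroup.mem_zpowers b, hassoc.symm⟩
    have helts1 : ∀ z ∈ D1, z = 1 ∨ z = b := by
      rintro z ⟨h0, hh0, rfl⟩
      rcases hbelts h0 hh0 with h | h <;> rw [h, mul_one]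
      · left; rfl
      · right; rfl
    have helts2 : ∀ z ∈ D2, z = w * b ∨ z = a ^ j := by
      rintro z ⟨h0, hh0, rfl⟩
      rcases hbelts h0 hh0 with h | h
      · left; rw [h, one_mul]
      · right; rw [h]; exact hassoc
    have hV12 : V1 ≠ V2 := by
      intro h
      have hDD : D1 = D2 := by simpa using congrArg (fun z => z.1.2) h
      have h1 : (1 : G) ∈ D2 := hDD ▸ hmem1
      rcases helts2 1 h1 with h2 | h2
      · have hwb : w = b := by
          rw [← hbinv]
          exact eq_inv_of_mul_eq_one_left h2.symm
        exact hba (hwb ▸ hwmem)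
      · exact hne (by rw [← h2])
    have hnb : ∀ z : GVert S, (cosetGraph S).Adj z V1 ↔ (cosetGraph S).Adj z V2 := by
      intro z
      rcases hsub z.1.1 z.2.1 with hz | hz
      · -- z is an a-vertex
        obtain ⟨yz, hyz⟩ := z.2.2
        rw [hz] at hyz
        have hzne1 : z ≠ V1 := by
          intro h; exact hab (by rw [← hz, h])
        have hzne2 : z ≠ V2 := by
          intro h; exact hab (by rw [← hz, h])
        constructor
        · intro h
          rw [cosetGraph_adj] at h ⊢
          obtain ⟨-, c, hcz, hc1⟩ := h
          refine ⟨hzne2, ?_⟩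
          rcases helts1 c hc1 with h2 | h2
          · subst h2
            have hzeq : z.1.2 = rcoset (Subgroup.zpowers a) 1 := by
              rw [hyz]
              exact (rcoset_eq_of_mem (hyz ▸ hcz)).symm
            exact ⟨a ^ j, by rw [hzeq]; exact ⟨a ^ j, pow_mem (Subgroup.mem_zpowers a) j,
              (mul_one _).symm⟩, hmemaj⟩
          · subst h2
            have hzeq : z.1.2 = rcoset (Subgroup.zpowers a) b := by
              rw [hyz]
              exact (rcoset_eq_of_mem (hyz ▸ hcz)).symm
            exact ⟨w * b, by rw [hzeq]; exact ⟨w, hwmem, rfl⟩, hmemwb⟩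
        · intro h
          rw [cosetGraph_adj] at h ⊢
          obtain ⟨-, c, hcz, hc2⟩ := h
          refine ⟨hzne1, ?_⟩
          rcases helts2 c hc2 with h2 | h2
          · subst h2
            have hzeq : z.1.2 = rcoset (Subgroup.zpowers a) (w * b) := by
              rw [hyz]
              exact (rcoset_eq_of_mem (hyz ▸ hcz)).symm
            refine ⟨b, by rw [hzeq]; exact ⟨w⁻¹, inv_mem hwmem, by group⟩, hmemb⟩
          · subst h2
            have hzeq : z.1.2 = rcoset (Subgroup.zpowers a) (a ^ j) := by
              rw [hyz]
              exact (rcoset_eq_of_mem (hyz ▸ hcz)).symm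
            refine ⟨1, by rw [hzeq]; exact ⟨(a ^ j)⁻¹, inv_mem (pow_mem (Subgroup.mem_zpowers a) j),
              by group⟩, hmem1⟩
      · -- z is a b-vertex : adjacent to neither
        constructor
        · intro h; exact absurd h (not_adj_same hz)
        · intro h; exact absurd h (not_adj_same hz)
    obtain ⟨e1, he1⟩ := hright V1 rfl
    obtain ⟨e2, he2⟩ := hright V2 rfl
    have he12 : e1 ≠ e2 := by
      intro h
      apply hV12
      apply φ.symm.injective
      rw [he1, he2, h]
    have hnotall : ¬ ∀ vf : Fin n, (vf ∈ (e1 : Sym2 (Fin n)) ↔ vf ∈ (e2 : Sym2 (Fin n))) := by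
      intro h
      exact he12 (Subtype.ext (Sym2.ext h))
    obtain ⟨vf, hvf⟩ := not_forall.mp hnotall
    have hcases : (vf ∈ (e1 : Sym2 (Fin n)) ∧ vf ∉ (e2 : Sym2 (Fin n)))
        ∨ (vf ∉ (e1 : Sym2 (Fin n)) ∧ vf ∈ (e2 : Sym2 (Fin n))) := by tauto
    have htrans : ∀ (i1 i2 : (completeGraph (Fin n)).edgeSet),
        φ.symm V1 = inr i1 → φ.symm V2 = inr i2 → vf ∈ (i1 : Sym2 (Fin n)) →
        vf ∈ (i2 : Sym2 (Fin n)) := by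
      intro i1 i2 hi1 hi2 hm
      have hadjv : (incidenceGraph (completeGraph (Fin n))).Adj (inl vf) (inr i1) :=
        incidence_adj.mpr hm
      have h2 : (cosetGraph S).Adj (φ (inl vf)) V1 := by
        have := φ.map_adj_iff.mpr hadjv
        rwa [← hi1, RelIso.apply_symm_apply] at this
      have h3 : (cosetGraph S).Adj (φ (inl vf)) V2 := (hnb _).mp h2
      have h4 : (incidenceGraph (completeGraph (Fin n))).Adj (inl vf) (inr i2) := by
        have h5 : (cosetGraph S).Adj (φ (inl vf)) (φ (inr i2)) := by
          rwa [← hi2, RelIso.apply_symm_apply]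
        exact φ.map_adj_iff.mp h5
      exact incidence_adj.mp h4
    rcases hcases with ⟨hm1, hm2⟩ | ⟨hm1, hm2⟩
    · exact hm2 (htrans e1 e2 he1 he2 hm1)
    · -- symmetric : use hnb in the other direction
      have htrans' : ∀ (i1 i2 : (completeGraph (Fin n)).edgeSet),
          φ.symm V1 = inr i1 → φ.symm V2 = inr i2 → vf ∈ (i2 : Sym2 (Fin n)) →
          vf ∈ (i1 : Sym2 (Fin n)) := by
        intro i1 i2 hi1 hi2 hm
        have hadjv : (incidenceGraph (completeGraph (Fin n))).Adj (inl vf) (inr i2) :=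
          incidence_adj.mpr hm
        have h2 : (cosetGraph S).Adj (φ (inl vf)) V2 := by
          have := φ.map_adj_iff.mpr hadjv
          rwa [← hi2, RelIso.apply_symm_apply] at this
        have h3 : (cosetGraph S).Adj (φ (inl vf)) V1 := (hnb _).mpr h2
        have h4 : (incidenceGraph (completeGraph (Fin n))).Adj (inl vf) (inr i1) := by
          have h5 : (cosetGraph S).Adj (φ (inl vf)) (φ (inr i1)) := by
            rwa [← hi1, RelIso.apply_symm_apply]
          exact φ.map_adj_iff.mp h5
        exact incidence_adj.mp h4
      exact hm1 (htrans' e1 e2 he1 he2 hm2)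
  · -- F5
    intro g
    by_cases hg : g ∈ Subgroup.zpowers a
    · exact Or.inl hg
    right
    set vA : GVert S := ⟨(a, rcoset (Subgroup.zpowers a) 1), haS, 1, rfl⟩ with hvA
    set vB : GVert S := ⟨(a, rcoset (Subgroup.zpowers a) g), haS, g, rfl⟩ with hvB
    have hABne : vA ≠ vB := by
      intro h
      have hDD : rcoset (Subgroup.zpowers a) 1 = rcoset (Subgroup.zpowers a) g := by
        simpa using congrArg (fun z => z.1.2) h
      have h1 : (1 : G) ∈ rcoset (Subgroup.zpowers a) g := hDD ▸ mem_rcoset_self _ _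
      obtain ⟨h0, hh0, hh⟩ := h1
      have hginv : h0⁻¹ = g := inv_eq_of_mul_eq_one_right hh.symm
      exact hg (hginv ▸ inv_mem hh0)
    obtain ⟨u, hu⟩ := hleft vA rfl
    obtain ⟨v', hv'⟩ := hleft vB rfl
    have huv : u ≠ v' := by
      intro h
      exact hABne (φ.symm.injective (hu.trans (h ▸ hv'.symm)))
    set f : (completeGraph (Fin n)).edgeSet := ⟨s(u, v'), by rw [SimpleGraph.mem_edgeSet]; exact huv⟩
    have hWA : (cosetGraph S).Adj vA (φ (inr f)) := by
      have h1 : (incidenceGraph (completeGraph (Fin n))).Adj (inl u) (inr f) :=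
        incidence_adj.mpr (Sym2.mem_mk_left _ _)
      have h2 := φ.map_adj_iff.mpr h1
      rwa [← hu, RelIso.apply_symm_apply] at h2
    have hWB : (cosetGraph S).Adj vB (φ (inr f)) := by
      have h1 : (incidenceGraph (completeGraph (Fin n))).Adj (inl v') (inr f) :=
        incidence_adj.mpr (Sym2.mem_mk_right _ _)
      have h2 := φ.map_adj_iff.mpr h1
      rwa [← hv', RelIso.apply_symm_apply] at h2
    set W : GVert S := φ (inr f) with hW
    rcases hsub W.1.1 W.2.1 with hWa | hWb
    · exact absurd hWA (not_adj_same (u := vA) (v := W) hWa.symm)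
    · obtain ⟨y, hy⟩ := W.2.2
      rw [hWb] at hy
      rw [cosetGraph_adj] at hWA hWB
      obtain ⟨-, c, hcA, hcW⟩ := hWA
      obtain ⟨-, d, hdB, hdW⟩ := hWB
      rw [hy] at hcW hdW
      obtain ⟨h1, hh1, rfl⟩ := hcW
      obtain ⟨h2, hh2, rfl⟩ := hdW
      have hrel : h2 * y = (h2 * h1⁻¹) * (h1 * y) := by group
      rcases hbelts (h2 * h1⁻¹) (mul_mem hh2 (inv_mem hh1)) with hcase | hcase
      · exfalso
        rw [hcase, one_mul] at hrel
        rw [hrel] at hdB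
        have hinter : (rcoset (Subgroup.zpowers a) 1 ∩ rcoset (Subgroup.zpowers a) g).Nonempty :=
          ⟨h1 * y, hcA, hdB⟩
        have heq := rcoset_eq_of_inter hinter
        have h1g : (1 : G) ∈ rcoset (Subgroup.zpowers a) g := heq ▸ mem_rcoset_self _ _
        obtain ⟨h0, hh0, hh⟩ := h1g
        have hginv : h0⁻¹ = g := inv_eq_of_mul_eq_one_right hh.symm
        exact hg (hginv ▸ inv_mem hh0)
      · obtain ⟨k, hk, hkk⟩ := hcA
        obtain ⟨k2, hk2, hkk2⟩ := hdB
        rw [mul_one] at hkk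
        refine ⟨k2⁻¹, inv_mem hk2, k, hk, ?_⟩
        have hby : h2 * y = b * k := by rw [hrel, hcase, ← hkk]
        have h8 : k2 * g = b * k := hkk2.symm.trans hby
        have h9 : g = k2⁻¹ * (b * k) := by rw [← h8, inv_mul_cancel_left]
        rw [h9, mul_assoc]


theorem main_alg (n : ℕ) (hn : 4 ≤ n) (σ ρ : Equiv.Perm ℕ)
    (hσ : ∀ k, σ k = sigmaFun n k) (hρ : ∀ k, ρ k = rhoFun n k)
    {G : Type} [Group G] (s t : G)
    (hs : orderOf s = n - 1) (ht : orderOf t = 2)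
    (hts : t ∉ zpowers s)
    (hF4 : ∀ j : ℕ, t * s ^ j * t ∈ zpowers s → s ^ j = 1)
    (hF5 : ∀ g : G, g ∈ zpowers s ∨ ∃ c ∈ zpowers s, ∃ d ∈ zpowers s, g = c * t * d) :
    ∃ τ : Equiv.Perm ℕ, ConditionC n σ ρ τ := by
  have hn1 : 0 < n - 1 := by omega
  have ht2 : t * t = 1 := by
    have := pow_orderOf_eq_one t; rw [ht, pow_two] at this; exact this
  have hsn1 : s ^ (n - 1) = 1 := by rw [← hs, pow_orderOf_eq_one]
  have hspow_ne : ∀ j : ℕ, 1 ≤ j → j ≤ n - 2 → s ^ j ≠ 1 := by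
    intro j h1 h2
    exact pow_ne_one_of_lt_orderOf (by omega) (by omega)
  -- basic sigma facts
  have hσ0 : ∀ j : ℕ, j = 0 ∨ n ≤ j → σ j = j := by
    intro j hj; rw [hσ]; unfold sigmaFun
    rw [if_neg (by omega), if_neg (by omega)]
  have hσpow0 : ∀ (m j : ℕ), (j = 0 ∨ n ≤ j) → (σ ^ m) j = j := by
    intro m; induction m with
    | zero => intro j _; simp
    | succ m ih =>
        intro j hj
        rw [pow_succ', Equiv.Perm.mul_apply, ih j hj, hσ0 j hj]
  have hσpow : ∀ (m j : ℕ), 1 ≤ j → j ≤ n - 1 → (σ ^ m) j = (j - 1 + m) % (n - 1) + 1 := by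
    intro m; induction m with
    | zero =>
        intro j h1 h2; simp only [pow_zero, Equiv.Perm.one_apply]
        rw [Nat.mod_eq_of_lt (by omega)]; omega
    | succ m ih =>
        intro j h1 h2
        rw [pow_succ', Equiv.Perm.mul_apply, ih j h1 h2, hσ]
        have hr : (j - 1 + m) % (n - 1) < n - 1 := Nat.mod_lt _ hn1
        set r := (j - 1 + m) % (n - 1) with hrdef
        have hmod : (j - 1 + (m + 1)) % (n - 1) = (r + 1) % (n - 1) := by
          rw [← Nat.add_assoc, Nat.add_mod (j - 1 + m) 1 (n - 1), ← hrdef,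
            Nat.mod_eq_of_lt (a := 1) (by omega), Nat.add_mod r 1 (n-1),
            Nat.mod_eq_of_lt (a := r) (by omega), Nat.mod_eq_of_lt (a := 1) (by omega)]
        unfold sigmaFun
        rcases Nat.lt_or_ge r (n - 2) with hcase | hcase
        · rw [if_pos (by omega), hmod, Nat.mod_eq_of_lt (by omega)]
        · have hr2 : r = n - 2 := by omega
          rw [if_neg (by omega), if_pos (by omega), hmod, hr2]
          have : n - 2 + 1 = n - 1 := by omega
          rw [this, Nat.mod_self]
  -- the labeling
  have hex : ∀ g : G, ∃ j : ℕ, (g ∈ zpowers s ∧ j = n) ∨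
      ((1 ≤ j ∧ j ≤ n - 1) ∧ ∃ c ∈ zpowers s, g = c * (t * s ^ j)) := by
    intro g
    rcases hF5 g with hg | ⟨c, hc, d, hd, rfl⟩
    · exact ⟨n, Or.inl ⟨hg, rfl⟩⟩
    · obtain ⟨m, hm, rfl⟩ := exists_pow_lt_of_mem_zpowers hn1 hs hd
      rcases Nat.eq_zero_or_pos m with rfl | hm0
      · exact ⟨n - 1, Or.inr ⟨⟨by omega, le_refl _⟩, c, hc, by
          rw [pow_zero, hsn1, mul_one, mul_one]⟩⟩
      · exact ⟨m, Or.inr ⟨⟨hm0, by omega⟩, c, hc, by rw [mul_assoc]⟩⟩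
  choose lab hlab using hex
  -- t * s^j ∉ zpowers s
  have hts' : ∀ j : ℕ, t * s ^ j ∉ zpowers s := by
    intro j hj
    exact hts (by
      have : t * s ^ j * (s ^ j)⁻¹ ∈ zpowers s := mul_mem hj (inv_mem (pow_mem (mem_zpowers s) j))
      simpa using this)
  -- cancellation
  have cancel : ∀ a b : ℕ, 1 ≤ a → a ≤ n - 1 → 1 ≤ b → b ≤ n - 1 →
      ∀ c : G, c ∈ zpowers s → t * s ^ a = c * (t * s ^ b) → a = b := by
    have half : ∀ a b : ℕ, b ≤ a → a ≤ n - 1 → 1 ≤ b →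
        ∀ c : G, c ∈ zpowers s → t * s ^ a = c * (t * s ^ b) → a = b := by
      intro a b hba ha hb c hc heq
      have hsplit : s ^ a = s ^ (a - b) * s ^ b := by
        rw [← pow_add]; congr 1; omega
      have h1 : t * s ^ (a - b) * s ^ b = c * t * s ^ b := by
        rw [mul_assoc, ← hsplit, heq, ← mul_assoc]
      have h2 : t * s ^ (a - b) = c * t := mul_right_cancel h1
      have h3 : t * s ^ (a - b) * t = c := by rw [h2, mul_assoc, ht2, mul_one]
      have h4 : s ^ (a - b) = 1 := hF4 _ (h3 ▸ hc)
      have h5 : (n - 1) ∣ (a - b) := hs ▸ orderOf_dvd_iff_pow_eq_one.mpr h4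
      have h6 : a - b = 0 := Nat.eq_zero_of_dvd_of_lt h5 (by omega)
      omega
    intro a b ha1 ha2 hb1 hb2 c hc heq
    rcases le_total b a with h | h
    · exact half a b h ha2 hb1 c hc heq
    · refine (half b a h hb2 ha1 c⁻¹ (inv_mem hc) ?_).symm
      rw [heq]; group
  have lab_eq : ∀ (g : G) (j : ℕ), 1 ≤ j → j ≤ n - 1 →
      (∃ c ∈ zpowers s, g = c * (t * s ^ j)) → lab g = j := by
    rintro g j h1 h2 ⟨c, hc, hg⟩
    rcases hlab g with ⟨hmem, _⟩ | ⟨⟨hj1, hj2⟩, c', hc', hg'⟩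
    · exact absurd (by
        have : c⁻¹ * g ∈ zpowers s := mul_mem (inv_mem hc) hmem
        rwa [hg, inv_mul_cancel_left] at this) (hts' j)
    · set i := lab g with hi
      refine cancel i j hj1 hj2 h1 h2 (c'⁻¹ * c) (mul_mem (inv_mem hc') hc) ?_
      rw [mul_assoc, ← hg, hg', inv_mul_cancel_left]
  have lab_mem : ∀ g : G, g ∈ zpowers s → lab g = n := by
    intro g hg
    rcases hlab g with ⟨_, h⟩ | ⟨_, c, hc, hgc⟩
    · exact h
    · exact absurd (by
        have : c⁻¹ * g ∈ zpowers s := mul_mem (inv_mem hc) hg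
        rwa [hgc, inv_mul_cancel_left] at this) (hts' _)
  have lab_one : lab 1 = n := lab_mem 1 (one_mem _)
  have lab_rep : ∀ j : ℕ, 1 ≤ j → j ≤ n - 1 → lab (t * s ^ j) = j := by
    intro j h1 h2; exact lab_eq _ j h1 h2 ⟨1, one_mem _, by rw [one_mul]⟩
  have lab_range : ∀ g : G, 1 ≤ lab g ∧ lab g ≤ n := by
    intro g; rcases hlab g with ⟨_, h⟩ | ⟨⟨h1, h2⟩, _⟩ <;> omega
  have lab_n_mem : ∀ g : G, lab g = n → g ∈ zpowers s := by
    intro g hg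
    rcases hlab g with ⟨h, _⟩ | ⟨⟨h1, h2⟩, _⟩
    · exact h
    · omega
  have lab_spec2 : ∀ g : G, lab g ≤ n - 1 →
      ∃ c ∈ zpowers s, g = c * (t * s ^ (lab g)) := by
    intro g hg
    rcases hlab g with ⟨_, h⟩ | ⟨_, h⟩
    · omega
    · exact h
  have lab_mul_left : ∀ (c g : G), c ∈ zpowers s → lab (c * g) = lab g := by
    intro c g hc
    rcases hlab g with ⟨hmem, h⟩ | ⟨⟨h1, h2⟩, c', hc', hg'⟩
    · rw [h]; exact lab_mem _ (mul_mem hc hmem)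
    · set j := lab g with hj
      exact lab_eq (c * g) j h1 h2 ⟨c * c', mul_mem hc hc', by rw [hg', mul_assoc]⟩
  -- lab (g * s) = σ (lab g)
  have lab_mul_s : ∀ g : G, lab (g * s) = σ (lab g) := by
    intro g
    rcases hlab g with ⟨hmem, h⟩ | ⟨⟨h1, h2⟩, c, hc, hg'⟩
    · rw [h, lab_mem _ (mul_mem hmem (mem_zpowers s)), hσ0 n (by omega)]
    · set j := lab g with hj
      rcases Nat.lt_or_ge j (n - 1) with hcase | hcase
      · have : lab (g * s) = j + 1 := by
          refine lab_eq _ (j+1) (by omega) (by omega) ⟨c, hc, ?_⟩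
          rw [hg', pow_succ]; simp only [mul_assoc]
        rw [this, hσ]; unfold sigmaFun; rw [if_pos (by omega)]
      · have hj1 : j = n - 1 := by omega
        have : lab (g * s) = 1 := by
          refine lab_eq _ 1 le_rfl (by omega) ⟨c, hc, ?_⟩
          rw [hg', hj1]; simp only [mul_assoc, hsn1, one_mul, pow_one]
        rw [this, hσ]; unfold sigmaFun
        rw [if_neg (by omega), if_pos (by omega)]
  have lab_mul_pow : ∀ (m : ℕ) (g : G), lab (g * s ^ m) = (σ ^ m) (lab g) := by
    intro m; induction m with
    | zero => intro g; simp
    | succ m ih =>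
        intro g
        rw [pow_succ, ← mul_assoc, lab_mul_s, ih, pow_succ', Equiv.Perm.mul_apply]
  -- tfun
  set tfun : ℕ → ℕ := fun j =>
    if j = n then n - 1 else if 1 ≤ j ∧ j ≤ n - 1 then lab (t * s ^ j * t) else j with htfun
  have tfun_n : tfun n = n - 1 := by simp [htfun]
  have tfun_mid : ∀ j : ℕ, 1 ≤ j → j ≤ n - 1 → tfun j = lab (t * s ^ j * t) := by
    intro j h1 h2; simp only [htfun]
    rw [if_neg (by omega), if_pos ⟨h1, h2⟩]
  have tfun_n1 : tfun (n - 1) = n := by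
    rw [tfun_mid (n-1) (by omega) le_rfl, hsn1, mul_one, ht2, lab_one]
  have tfun_out : ∀ j : ℕ, j = 0 ∨ n < j → tfun j = j := by
    intro j hj; simp only [htfun]
    rw [if_neg (by omega), if_neg (by omega)]
  have tfun_low : ∀ j : ℕ, 1 ≤ j → j ≤ n - 2 → 1 ≤ tfun j ∧ tfun j ≤ n - 2 := by
    intro j h1 h2
    rw [tfun_mid j h1 (by omega)]
    rcases lab_range (t * s ^ j * t) with ⟨hr1, hr2⟩
    have hne_n : lab (t * s ^ j * t) ≠ n := by
      intro h
      exact hspow_ne j h1 h2 (hF4 j (lab_n_mem _ h))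
    have hne_n1 : lab (t * s ^ j * t) ≠ n - 1 := by
      intro h
      obtain ⟨c, hc, hgc⟩ := lab_spec2 (t * s ^ j * t) (by omega)
      rw [h, hsn1, mul_one] at hgc
      have : t * s ^ j = c := by
        have := congrArg (· * t) hgc
        simpa [mul_assoc, ht2] using this
      exact hts' j (this ▸ hc)
    omega
  have tfun_mul_t : ∀ g : G, lab (g * t) = tfun (lab g) := by
    intro g
    rcases hlab g with ⟨hmem, h⟩ | ⟨⟨h1, h2⟩, c, hc, hg'⟩
    · rw [h, tfun_n]
      refine lab_eq _ (n-1) (by omega) le_rfl ⟨g, hmem, ?_⟩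
      rw [hsn1, mul_one]
    · set j := lab g with hj
      rw [tfun_mid j h1 h2, hg', mul_assoc, mul_assoc, ← mul_assoc t,
        lab_mul_left c _ hc]
  have tfun_invol : Function.Involutive tfun := by
    intro j
    rcases Nat.lt_or_ge j 1 with hj | hj
    · have hj0 : j = 0 := by omega
      rw [hj0, tfun_out 0 (by omega), tfun_out 0 (by omega)]
    rcases Nat.lt_or_ge n j with hj2 | hj2
    · rw [tfun_out j (by omega), tfun_out j (by omega)]
    rcases Nat.eq_or_lt_of_le hj2 with hjn | hjn
    · rw [hjn, tfun_n, tfun_n1]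
    rcases Nat.eq_or_lt_of_le (show j ≤ n - 1 by omega) with hjn1 | hjn1
    · rw [hjn1, tfun_n1, tfun_n]
    -- now 1 ≤ j ≤ n - 2
    have h2 : j ≤ n - 2 := by omega
    have hi := tfun_low j hj h2
    rw [tfun_mid j hj (by omega)] at hi ⊢
    set i := lab (t * s ^ j * t) with hidef
    obtain ⟨c, hc, hgc⟩ := lab_spec2 (t * s ^ j * t) (by omega)
    rw [← hidef] at hgc
    rw [tfun_mid i (by omega) (by omega)]
    have key : t * s ^ i * t = c⁻¹ * (t * s ^ j) := by
      have h3 : t * s ^ i = c⁻¹ * (t * s ^ j * t) := by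
        rw [hgc, inv_mul_cancel_left]
      rw [h3]
      simp [mul_assoc, ht2]
    rw [key, lab_mul_left _ _ (inv_mem hc), lab_rep j hj (by omega)]
  set τ : Equiv.Perm ℕ := Function.Involutive.toPerm tfun tfun_invol with hτdef
  have τapp : ∀ x : ℕ, τ x = tfun x := fun _ => rfl
  have τsq : τ * τ = 1 := by
    ext x
    simp only [Equiv.Perm.mul_apply, Equiv.Perm.one_apply, τapp]
    exact tfun_invol x
  refine ⟨τ, ?_, ?_, ?_, ?_⟩
  · refine orderOf_eq_prime (by rw [pow_two, τsq]) ?_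
    intro h
    have : τ n = n := by rw [h]; rfl
    rw [τapp, tfun_n] at this
    omega
  · rw [τapp, tfun_n]
  · intro k hk
    rw [τapp, tfun_out k (by omega)]
  · intro k hk1 hk2
    set A := lab (t * s ^ k * t) with hA
    have hτk : τ k = A := by rw [τapp, tfun_mid k hk1 (by omega), hA]
    have hAr : 1 ≤ A ∧ A ≤ n - 2 := by
      have := tfun_low k hk1 hk2
      rwa [tfun_mid k hk1 (by omega), ← hA] at this
    obtain ⟨c, hc, hgc⟩ := lab_spec2 (t * s ^ k * t) (by omega)
    rw [← hA] at hgc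
    obtain ⟨B, hBlt, rfl⟩ := exists_pow_lt_of_mem_zpowers hn1 hs hc
    -- E : t * s^k * t = s^B * (t * s^A)
    have evalL : ∀ g : G, (τ * σ ^ k * τ) (lab g) = lab (g * t * s ^ k * t) := by
      intro g
      rw [Equiv.Perm.mul_apply, Equiv.Perm.mul_apply, τapp (lab g), ← tfun_mul_t g,
        ← lab_mul_pow k (g * t), τapp, ← tfun_mul_t]
    have evalR : ∀ (a b : ℕ) (g : G),
        (σ ^ a * τ * σ ^ b) (lab g) = lab (g * s ^ b * t * s ^ a) := by
      intro a b g
      rw [Equiv.Perm.mul_apply, Equiv.Perm.mul_apply, ← lab_mul_pow b g, τapp,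
        ← tfun_mul_t, ← lab_mul_pow a]
    have key : ∀ g : G, g * t * s ^ k * t = g * s ^ B * t * s ^ A := by
      intro g
      simp only [mul_assoc]
      congr 1
      rw [← mul_assoc, ← mul_assoc, hgc]
      simp [mul_assoc]
    have P : τ * σ ^ k * τ = σ ^ A * τ * σ ^ B := by
      ext j
      by_cases hout : j = 0 ∨ n < j
      · have hτj : τ j = j := by rw [τapp, tfun_out j hout]
        have h0 : ∀ m : ℕ, (σ ^ m) j = j := fun m => hσpow0 m j (by omega)
        simp only [Equiv.Perm.mul_apply]
        rw [hτj, h0 k, h0 B, hτj, h0 A]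
      · have hj : 1 ≤ j ∧ j ≤ n := by omega
        have : ∃ g : G, lab g = j := by
          rcases Nat.eq_or_lt_of_le hj.2 with h | h
          · exact ⟨1, by rw [lab_one, h]⟩
          · exact ⟨t * s ^ j, lab_rep j hj.1 (by omega)⟩
        obtain ⟨g, hg⟩ := this
        rw [← hg, evalL, evalR, key]
    have hτn1 : τ (n - 1) = n := by rw [τapp, tfun_n1]
    have hτn : τ n = n - 1 := by rw [τapp, tfun_n]
    have hPev : (σ ^ A * τ * σ ^ B) (n - 1) = n - 1 := by
      rw [← P]
      simp only [Equiv.Perm.mul_apply]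
      rw [hτn1, hσpow0 k n (by omega), hτn]
    have hB0 : B ≠ 0 := by
      intro h
      subst h
      rw [pow_zero, mul_one, Equiv.Perm.mul_apply, hτn1,
        hσpow0 A n (by omega)] at hPev
      omega
    have hBr : 1 ≤ B ∧ B ≤ n - 2 := ⟨by omega, by omega⟩
    have hsBn1 : (σ ^ B) (n - 1) = B := by
      rw [hσpow B (n-1) (by omega) le_rfl]
      have h : n - 1 - 1 + B = (B - 1) + (n - 1) := by omega
      rw [h, Nat.add_mod_right, Nat.mod_eq_of_lt (by omega)]
      omega
    have hDr := tfun_low B hBr.1 hBr.2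
    rw [Equiv.Perm.mul_apply, Equiv.Perm.mul_apply, hsBn1, τapp] at hPev
    set D := tfun B with hDdef
    rw [hσpow A D (by omega) (by omega)] at hPev
    have hDA : D = n - 1 - A := by
      rcases Nat.lt_or_ge (D - 1 + A) (n - 1) with h | h
      · rw [Nat.mod_eq_of_lt h] at hPev; omega
      · have h2 : D - 1 + A = (D - 1 + A - (n - 1)) + (n - 1) := by omega
        rw [h2, Nat.add_mod_right, Nat.mod_eq_of_lt (by omega)] at hPev
        omega
    have hρA : ρ A = D := by
      rw [hρ]; unfold rhoFun
      rw [if_pos ⟨hAr.1, hAr.2⟩]; omega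
    have hτD : τ D = B := by
      rw [τapp, hDdef, tfun_invol B]
    rw [hτk, hρA, hτD]
    exact P

lemma rho_invol (n : ℕ) (hn : 2 ≤ n) : Function.Involutive (rhoFun n) := by
  intro k
  by_cases h1 : 1 ≤ k ∧ k ≤ n - 2
  · have e1 : rhoFun n k = n - 1 - k := by unfold rhoFun; rw [if_pos h1]
    rw [e1]; unfold rhoFun; rw [if_pos (by omega)]; omega
  · by_cases h2 : k = n - 1
    · have e1 : rhoFun n k = n := by unfold rhoFun; rw [if_neg h1, if_pos h2]
      rw [e1]; unfold rhoFun
      rw [if_neg (by omega), if_neg (by omega), if_pos rfl]; omega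
    · by_cases h3 : k = n
      · have e1 : rhoFun n k = n - 1 := by
          unfold rhoFun; rw [if_neg h1, if_neg h2, if_pos h3]
        rw [e1]; unfold rhoFun
        rw [if_neg (by omega), if_pos rfl]; omega
      · have e1 : rhoFun n k = k := by
          unfold rhoFun; rw [if_neg h1, if_neg h2, if_neg h3]
        rw [e1, e1]

lemma rho_conditions (n : ℕ) (hn : 2 ≤ n) (ρ : Equiv.Perm ℕ)
    (hρ : ∀ k, ρ k = rhoFun n k) :
    orderOf ρ = 2 ∧ ρ n = n - 1 ∧ (∀ k : ℕ, k = 0 ∨ n < k → ρ k = k) := by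
  have hρn : ρ n = n - 1 := by
    rw [hρ]; unfold rhoFun
    rw [if_neg (by omega), if_neg (by omega), if_pos rfl]
  refine ⟨?_, hρn, ?_⟩
  · refine orderOf_eq_prime ?_ ?_
    · ext k
      rw [pow_two, Equiv.Perm.mul_apply, hρ, hρ, Equiv.Perm.one_apply]
      exact rho_invol n hn k
    · intro h
      have : ρ n = n := by rw [h]; rfl
      rw [hρn] at this
      omega
  · intro k hk
    rw [hρ]; unfold rhoFun
    rw [if_neg (by omega), if_neg (by omega), if_neg (by omega)]

lemma small2 (σ ρ : Equiv.Perm ℕ) (hσ : ∀ k, σ k = sigmaFun 2 k)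
    (hρ : ∀ k, ρ k = rhoFun 2 k) : ∃ τ : Equiv.Perm ℕ, ConditionC 2 σ ρ τ := by
  obtain ⟨h1, h2, h3⟩ := rho_conditions 2 (by norm_num) ρ hρ
  exact ⟨ρ, h1, h2, h3, fun k hk1 hk2 => by omega⟩

lemma small3 (σ ρ : Equiv.Perm ℕ) (hσ : ∀ k, σ k = sigmaFun 3 k)
    (hρ : ∀ k, ρ k = rhoFun 3 k) : ∃ τ : Equiv.Perm ℕ, ConditionC 3 σ ρ τ := by
  obtain ⟨h1, h2, h3⟩ := rho_conditions 3 (by norm_num) ρ hρ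
  -- value tables
  have hs : ∀ j : ℕ, σ j = if j = 1 then 2 else if j = 2 then 1 else j := by
    intro j
    rw [hσ]; unfold sigmaFun
    split_ifs <;> omega
  have hr : ∀ j : ℕ, ρ j = if j = 2 then 3 else if j = 3 then 2 else j := by
    intro j
    rw [hρ]; unfold rhoFun
    split_ifs <;> omega
  refine ⟨ρ, h1, h2, h3, fun k hk1 hk2 => ?_⟩
  have hk : k = 1 := by omega
  subst hk
  have hρ1 : ρ 1 = 1 := by rw [hr]; norm_num
  rw [hρ1, hρ1, hρ1, pow_one]
  ext j
  simp only [Equiv.Perm.mul_apply]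
  rcases Nat.lt_or_ge j 4 with hj | hj
  · interval_cases j <;> simp [hs, hr]
  · have hsj : σ j = j := by rw [hs]; rw [if_neg (by omega), if_neg (by omega)]
    have hrj : ρ j = j := by rw [hr]; rw [if_neg (by omega), if_neg (by omega)]
    rw [hrj, hsj, hrj, hsj]

/-- If the incidence graph of `K_n` is a G-graph, i.e. is isomorphic to the coset graph
of some `(G,S)` with `S` finite and its elements pairwise independent, then some
`τ ∈ S_n` satisfies condition (C). -/
theorem conditionC_of_incidenceGraph_complete_Ggraph (n : ℕ) (hn : 2 ≤ n)
    (σ ρ : Equiv.Perm ℕ)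
    (hσ : ∀ k, σ k = sigmaFun n k) (hρ : ∀ k, ρ k = rhoFun n k)
    (hG : ∃ (G : Type) (_ : Group G) (S : Set G), S.Finite ∧
      (∀ a ∈ S, ∀ b ∈ S, a ≠ b → Subgroup.zpowers a ⊓ Subgroup.zpowers b = ⊥) ∧
      Nonempty (incidenceGraph (completeGraph (Fin n)) ≃g cosetGraph S)) :
    ∃ τ : Equiv.Perm ℕ, ConditionC n σ ρ τ := by
  obtain ⟨G, _, S, hfin, hind, ⟨φ⟩⟩ := hG
  rcases Nat.lt_or_ge n 4 with h | h
  · interval_cases n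
    · exact small2 σ ρ hσ hρ
    · exact small3 σ ρ hσ hρ
  · obtain ⟨s, t, hs, ht, hts, hF4, hF5⟩ := graph_facts n h S hind φ
    exact main_alg n h σ ρ hσ hρ s t hs ht hts hF4 hF5
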